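/- arXiv:1907.01701 — 4 statements merged into one kernel-verified Lean document; each statement's English description precedes it below -/
import Mathlib

section
/- The function u(x,y,z) = x^2 y^2 + 2z^2 satisfies (∇_H^2 u)^⋆(p) ≥ 0 (positive semidefinite) at every point p ∈ R^3, where (∇_H^2 u)^⋆ is the symmetrized horizontal Hessian built from X = ∂_x - (y/2)∂_z and Y = ∂_y + (x/2)∂_z, but u is not convex in the Euclidean sense on R^3. -/
noncomputable section

abbrev H3 : Type := ℝ × ℝ × ℝ

def hmul (p q : H3) : H3 :=
  (p.1 + q.1, p.2.1 + q.2.1, p.2.2 + q.2.2 + (p.1 * q.2.1 - q.1 * p.2.1) / 2)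

def pd1 (u : H3 → ℝ) (p : H3) : ℝ := fderiv ℝ u p (1, 0, 0)
def pd2 (u : H3 → ℝ) (p : H3) : ℝ := fderiv ℝ u p (0, 1, 0)
def pd3 (u : H3 → ℝ) (p : H3) : ℝ := fderiv ℝ u p (0, 0, 1)

/-- Left-invariant horizontal vector field X = ∂ₓ − (y/2)∂_z. -/
def Xop (u : H3 → ℝ) (p : H3) : ℝ := pd1 u p - p.2.1 / 2 * pd3 u p

/-- Left-invariant horizontal vector field Y = ∂_y + (x/2)∂_z. -/
def Yop (u : H3 → ℝ) (p : H3) : ℝ := pd2 u p + p.1 / 2 * pd3 u p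

/-- Symmetrized horizontal Hessian. -/
def hHess (u : H3 → ℝ) (p : H3) : Matrix (Fin 2) (Fin 2) ℝ :=
  !![Xop (Xop u) p, (Xop (Yop u) p + Yop (Xop u) p) / 2;
     (Xop (Yop u) p + Yop (Xop u) p) / 2, Yop (Yop u) p]

/-!
`X u = 2xy² - 2yz` and `Y u = 2x²y + 2xz`. The `z`-terms of `XY u` and `YX u` are opposite,
so they cancel in the symmetrization and the horizontal Hessian is the rank-one matrix
`3 (y, x)ᵀ (y, x)`. Euclidean convexity fails along the segment from `(2, 0, 0)` to `(0, 2, 0)`: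
`u` vanishes at both ends and equals `1` at the midpoint.
-/

theorem Xop_eq_fderiv (u : H3 → ℝ) (p : H3) :
    Xop u p = fderiv ℝ u p (1, 0, -(p.2.1 / 2)) := by
  have hv : ((1, 0, -(p.2.1 / 2)) : H3) = (1, 0, 0) - (p.2.1 / 2) • (0, 0, 1) := by simp
  rw [Xop, pd1, pd3, hv, map_sub, map_smul, smul_eq_mul]

theorem Yop_eq_fderiv (u : H3 → ℝ) (p : H3) : Yop u p = fderiv ℝ u p (0, 1, p.1 / 2) := by
  have hv : ((0, 1, p.1 / 2) : H3) = (0, 1, 0) + (p.1 / 2) • (0, 0, 1) := by simp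
  rw [Yop, pd2, pd3, hv, map_add, map_smul, smul_eq_mul]

def u₀ (q : H3) : ℝ := q.1 ^ 2 * q.2.1 ^ 2 + 2 * q.2.2 ^ 2

theorem Xop_u₀ : Xop u₀ = fun q => 2 * q.1 * q.2.1 ^ 2 - 2 * q.2.1 * q.2.2 := by
  funext p
  rw [Xop_eq_fderiv]
  unfold u₀
  simp (disch := fun_prop) [fderiv_fun_add, fderiv_fun_mul, fderiv_fun_pow, fderiv.fst, fderiv.snd]
  ring

theorem Yop_u₀ : Yop u₀ = fun q => 2 * q.1 ^ 2 * q.2.1 + 2 * q.1 * q.2.2 := by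
  funext p
  rw [Yop_eq_fderiv]
  unfold u₀
  simp (disch := fun_prop) [fderiv_fun_add, fderiv_fun_mul, fderiv_fun_pow, fderiv.fst, fderiv.snd]
  ring

theorem hHess_u₀ (p : H3) :
    hHess u₀ p = (3 : ℝ) • Matrix.vecMulVec ![p.2.1, p.1] ![p.2.1, p.1] := by
  rw [hHess, Xop_u₀, Yop_u₀, Xop_eq_fderiv, Xop_eq_fderiv, Yop_eq_fderiv, Yop_eq_fderiv]
  simp (disch := fun_prop) [fderiv_fun_add, fderiv_fun_sub, fderiv_fun_mul, fderiv_fun_pow,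
    fderiv.fst, fderiv.snd]
  ext i j
  fin_cases i <;> fin_cases j <;> simp <;> ring

theorem hHess_u₀_posSemidef (p : H3) : (hHess u₀ p).PosSemidef := by
  rw [hHess_u₀]
  exact (Matrix.posSemidef_vecMulVec_self_star _).smul (by norm_num)

theorem not_convexOn_u₀ : ¬ ConvexOn ℝ Set.univ u₀ := by
  intro h
  have hmid := h.2 (Set.mem_univ ((2 : ℝ), (0 : ℝ), (0 : ℝ)))
    (Set.mem_univ ((0 : ℝ), (2 : ℝ), (0 : ℝ)))
    (by norm_num : (0 : ℝ) ≤ 1 / 2) (by norm_num : (0 : ℝ) ≤ 1 / 2) (by norm_num)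
  norm_num [u₀] at hmid

theorem hconvex_not_euclidean_convex :
    (∀ p : H3, (hHess (fun q : H3 => q.1 ^ 2 * q.2.1 ^ 2 + 2 * q.2.2 ^ 2) p).PosSemidef) ∧
    ¬ ConvexOn ℝ Set.univ (fun q : H3 => q.1 ^ 2 * q.2.1 ^ 2 + 2 * q.2.2 ^ 2) :=
  ⟨hHess_u₀_posSemidef, not_convexOn_u₀⟩
end
end

section
/- For u(x,y,z) = 2xz + x²y + (1/4)x⁴ - x² + (3/2)y², the symmetrized horizontal Hessian equals (∇_H^2 u)^⋆(x,y,z) = [[3x²-2, 3x],[3x, 3]], and this matrix is not positive semidefinite at the origin (so u is not h-convex), while for f(x,y,z) = 2xz + x²y + (1/4)x⁴ + (3/2)y² + 6y - 1 the symmetrized horizontal Hessian equals [[3x², 3x],[3x, 3]], which is positive semidefinite at every point. -/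
noncomputable section

/-!
The horizontal fields reduce to one-variable derivatives along coordinate lines, so both Hessians
are computed by differentiating explicit polynomials. The Hessian of `f` is the rank-one matrix
`3 (x, 1)ᵀ (x, 1)`, hence positive semidefinite, while that of `u` has the entry `-2` at the origin.
-/

section Coordinates

variable {u : H3 → ℝ} {x y z : ℝ}

lemma pd1_mk (hu : DifferentiableAt ℝ u (x, y, z)) :
    pd1 u (x, y, z) = deriv (fun t => u (t, y, z)) x := by
  have h : HasDerivAt (fun t : ℝ => ((t, y, z) : H3)) (1, 0, 0) x :=
    (hasDerivAt_id x).prodMk ((hasDerivAt_const x y).prodMk (hasDerivAt_const x z))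
  exact (hu.hasFDerivAt.comp_hasDerivAt x h).deriv.symm

lemma pd2_mk (hu : DifferentiableAt ℝ u (x, y, z)) :
    pd2 u (x, y, z) = deriv (fun t => u (x, t, z)) y := by
  have h : HasDerivAt (fun t : ℝ => ((x, t, z) : H3)) (0, 1, 0) y :=
    (hasDerivAt_const y x).prodMk ((hasDerivAt_id y).prodMk (hasDerivAt_const y z))
  exact (hu.hasFDerivAt.comp_hasDerivAt y h).deriv.symm

lemma pd3_mk (hu : DifferentiableAt ℝ u (x, y, z)) :
    pd3 u (x, y, z) = deriv (fun t => u (x, y, t)) z := by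
  have h : HasDerivAt (fun t : ℝ => ((x, y, t) : H3)) (0, 0, 1) z :=
    (hasDerivAt_const z x).prodMk ((hasDerivAt_const z y).prodMk (hasDerivAt_id z))
  exact (hu.hasFDerivAt.comp_hasDerivAt z h).deriv.symm

lemma Xop_mk (hu : DifferentiableAt ℝ u (x, y, z)) :
    Xop u (x, y, z) =
      deriv (fun t => u (t, y, z)) x - y / 2 * deriv (fun t => u (x, y, t)) z := by
  rw [Xop, pd1_mk hu, pd3_mk hu]

lemma Yop_mk (hu : DifferentiableAt ℝ u (x, y, z)) :
    Yop u (x, y, z) =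
      deriv (fun t => u (x, t, z)) y + x / 2 * deriv (fun t => u (x, y, t)) z := by
  rw [Yop, pd2_mk hu, pd3_mk hu]

end Coordinates

lemma Matrix.posSemidef_smul_rankOne_fin_two {c : ℝ} (hc : 0 ≤ c) (a : ℝ) :
    (!![c * a ^ 2, c * a; c * a, c] : Matrix (Fin 2) (Fin 2) ℝ).PosSemidef := by
  have h : !![c * a ^ 2, c * a; c * a, c] = c • vecMulVec ![a, 1] (star ![a, 1]) := by
    ext i j
    fin_cases i <;> fin_cases j <;> simp [sq, mul_comm]
  rw [h]
  exact (posSemidef_vecMulVec_self_star _).smul hc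

def exampleU : H3 → ℝ := fun q =>
  2 * q.1 * q.2.2 + q.1 ^ 2 * q.2.1 + (1 / 4) * q.1 ^ 4 - q.1 ^ 2 + (3 / 2) * q.2.1 ^ 2

def exampleF : H3 → ℝ := fun q =>
  2 * q.1 * q.2.2 + q.1 ^ 2 * q.2.1 + (1 / 4) * q.1 ^ 4 + (3 / 2) * q.2.1 ^ 2 + 6 * q.2.1 - 1

lemma Xop_exampleU : Xop exampleU = fun q => 2 * q.2.2 + q.1 * q.2.1 + q.1 ^ 3 - 2 * q.1 := by
  funext ⟨x, y, z⟩
  rw [Xop_mk (by unfold exampleU; fun_prop)]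
  simp (disch := fun_prop) [exampleU]
  ring

lemma Yop_exampleU : Yop exampleU = fun q => 2 * q.1 ^ 2 + 3 * q.2.1 := by
  funext ⟨x, y, z⟩
  rw [Yop_mk (by unfold exampleU; fun_prop)]
  simp (disch := fun_prop) [exampleU]
  ring

lemma Xop_exampleF : Xop exampleF = fun q => 2 * q.2.2 + q.1 * q.2.1 + q.1 ^ 3 := by
  funext ⟨x, y, z⟩
  rw [Xop_mk (by unfold exampleF; fun_prop)]
  simp (disch := fun_prop) [exampleF]
  ring

lemma Yop_exampleF : Yop exampleF = fun q => 2 * q.1 ^ 2 + 3 * q.2.1 + 6 := by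
  funext ⟨x, y, z⟩
  rw [Yop_mk (by unfold exampleF; fun_prop)]
  simp (disch := fun_prop) [exampleF]
  ring

lemma hHess_exampleU (p : H3) :
    hHess exampleU p = !![3 * p.1 ^ 2 - 2, 3 * p.1; 3 * p.1, 3] := by
  obtain ⟨x, y, z⟩ := p
  rw [hHess, Xop_exampleU, Yop_exampleU, Xop_mk (by fun_prop), Xop_mk (by fun_prop),
    Yop_mk (by fun_prop), Yop_mk (by fun_prop)]
  ext i j
  fin_cases i <;> fin_cases j <;> simp (disch := fun_prop) <;> ring

lemma hHess_exampleF (p : H3) :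
    hHess exampleF p = !![3 * p.1 ^ 2, 3 * p.1; 3 * p.1, 3] := by
  obtain ⟨x, y, z⟩ := p
  rw [hHess, Xop_exampleF, Yop_exampleF, Xop_mk (by fun_prop), Xop_mk (by fun_prop),
    Yop_mk (by fun_prop), Yop_mk (by fun_prop)]
  ext i j
  fin_cases i <;> fin_cases j <;> simp (disch := fun_prop) <;> ring

lemma not_posSemidef_hHess_exampleU_zero : ¬ (hHess exampleU (0, 0, 0)).PosSemidef := by
  intro h
  have h00 := h.diag_nonneg (i := 0)
  rw [hHess_exampleU] at h00
  norm_num at h00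

lemma posSemidef_hHess_exampleF (p : H3) : (hHess exampleF p).PosSemidef := by
  rw [hHess_exampleF]
  exact Matrix.posSemidef_smul_rankOne_fin_two (by norm_num) p.1

theorem hessians_of_u_and_f :
    (∀ p : H3,
      hHess (fun q : H3 => 2 * q.1 * q.2.2 + q.1 ^ 2 * q.2.1 + (1 / 4) * q.1 ^ 4
          - q.1 ^ 2 + (3 / 2) * q.2.1 ^ 2) p
        = !![3 * p.1 ^ 2 - 2, 3 * p.1; 3 * p.1, 3]) ∧
    ¬ (hHess (fun q : H3 => 2 * q.1 * q.2.2 + q.1 ^ 2 * q.2.1 + (1 / 4) * q.1 ^ 4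
          - q.1 ^ 2 + (3 / 2) * q.2.1 ^ 2) ((0 : ℝ), (0 : ℝ), (0 : ℝ))).PosSemidef ∧
    (∀ p : H3,
      hHess (fun q : H3 => 2 * q.1 * q.2.2 + q.1 ^ 2 * q.2.1 + (1 / 4) * q.1 ^ 4
          + (3 / 2) * q.2.1 ^ 2 + 6 * q.2.1 - 1) p
        = !![3 * p.1 ^ 2, 3 * p.1; 3 * p.1, 3]) ∧
    (∀ p : H3,
      (hHess (fun q : H3 => 2 * q.1 * q.2.2 + q.1 ^ 2 * q.2.1 + (1 / 4) * q.1 ^ 4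
          + (3 / 2) * q.2.1 ^ 2 + 6 * q.2.1 - 1) p).PosSemidef) := by
  exact ⟨hHess_exampleU, not_posSemidef_hHess_exampleU_zero, hHess_exampleF,
    posSemidef_hHess_exampleF⟩
end
end

section
/- If u: H → R is upper semicontinuous and bounded below, then S[u] is upper semicontinuous on H, where S[u](p) is the infimum of Σ_{i=1}^3 cᵢ u(pᵢ) over cᵢ ∈ [0,1] with Σcᵢ = 1, pᵢ in the horizontal plane H_p, and Σcᵢ pᵢ = p. -/
noncomputable section

/-- Membership in the left-invariant horizontal plane through `p`:
`y_p x − x_p y + 2z − 2z_p = 0`. -/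
def onPlane (p q : H3) : Prop :=
  p.2.1 * q.1 - p.1 * q.2.1 + 2 * q.2.2 - 2 * p.2.2 = 0

/-- The partial convexification operator `S`. -/
def Sop (u : H3 → ℝ) (p : H3) : ℝ :=
  sInf { s : ℝ | ∃ (c : Fin 3 → ℝ) (q : Fin 3 → H3),
    (∀ i, c i ∈ Set.Icc (0 : ℝ) 1) ∧ (∑ i, c i) = 1 ∧ (∀ i, onPlane p (q i)) ∧
    (∑ i, c i • q i) = p ∧ s = ∑ i, c i * u (q i) }

/-- Coercivity: `inf_{|p| ≥ R} u(p)/|p| → ∞` as `R → ∞`. -/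
def Coercive (u : H3 → ℝ) : Prop :=
  ∀ C : ℝ, ∃ R : ℝ, ∀ p : H3, R ≤ ‖p‖ → C ≤ u p / ‖p‖

/-- Horizontal convexity (midpoint inequality along horizontal directions). -/
def hConvex (u : H3 → ℝ) : Prop :=
  ∀ p h : H3, h.2.2 = 0 → 2 * u p ≤ u (hmul p h) + u (hmul p (-h.1, -h.2.1, -h.2.2))

/-! Left translations of the Heisenberg group are affine maps of `ℝ³` carrying horizontal planes
to horizontal planes. So an admissible decomposition `p = ∑ cᵢ qᵢ` on `H_p` is moved by the
translation `r · p⁻¹` to an admissible decomposition of `r` on `H_r`, with the same weights and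
with points depending continuously on `r`. Hence near `p`, `S[u]` is bounded by the upper
semicontinuous function `r ↦ ∑ cᵢ u((r · p⁻¹) · qᵢ)`, which is `< y` at `p` whenever the
decomposition witnesses `S[u](p) < y`. -/

lemma hmul_neg_self (p : H3) : hmul p (-p) = 0 := by
  ext <;> simp [hmul]

lemma zero_hmul (p : H3) : hmul 0 p = p := by
  simp [hmul]

lemma hmul_neg_hmul_cancel (r p : H3) : hmul (hmul r (-p)) p = r := by
  ext <;> simp [hmul]; ring

lemma continuous_hmul_left (q : H3) : Continuous fun g : H3 => hmul g q := by
  unfold hmul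
  fun_prop

lemma onPlane_hmul (g : H3) {p q : H3} (h : onPlane p q) : onPlane (hmul g p) (hmul g q) := by
  unfold onPlane hmul at *
  linear_combination h

lemma hmul_sum_smul (g : H3) {ι : Type*} (s : Finset ι) (c : ι → ℝ) (q : ι → H3)
    (hc : ∑ i ∈ s, c i = 1) : hmul g (∑ i ∈ s, c i • q i) = ∑ i ∈ s, c i • hmul g (q i) := by
  have hconst (a : ℝ) : ∑ i ∈ s, c i * a = a := by rw [← Finset.sum_mul, hc, one_mul]
  ext <;> simp only [hmul, Prod.fst_sum, Prod.snd_sum, Prod.smul_fst, Prod.smul_snd, smul_eq_mul,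
    mul_add, Finset.sum_add_distrib, hconst, add_right_inj]
  simp only [mul_div_assoc', ← Finset.sum_div]
  rw [Finset.mul_sum, Finset.sum_mul, ← Finset.sum_sub_distrib]
  exact congrArg (· / 2) (Finset.sum_congr rfl fun i _ => by ring)

lemma upperSemicontinuous_sum_const_mul {X ι : Type*} [TopologicalSpace X] (s : Finset ι)
    {c : ι → ℝ} (hc : ∀ i, 0 ≤ c i) {f : ι → X → ℝ} (hf : ∀ i, UpperSemicontinuous (f i)) :
    UpperSemicontinuous fun x => ∑ i ∈ s, c i * f i x :=
  upperSemicontinuous_sum fun i _ =>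
    (continuous_const_mul (c i)).comp_upperSemicontinuous (hf i)
      (monotone_mul_left_of_nonneg (hc i))

lemma Sop_le {u : H3 → ℝ} (hb : BddBelow (Set.range u)) {p : H3} {c : Fin 3 → ℝ}
    {q : Fin 3 → H3} (hc : ∀ i, c i ∈ Set.Icc (0 : ℝ) 1) (hcs : ∑ i, c i = 1)
    (hq : ∀ i, onPlane p (q i)) (hsum : ∑ i, c i • q i = p) :
    Sop u p ≤ ∑ i, c i * u (q i) := by
  obtain ⟨m, hm⟩ := hb
  refine csInf_le ⟨m, ?_⟩ ⟨c, q, hc, hcs, hq, hsum, rfl⟩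
  rintro _ ⟨c', q', hc', hcs', -, -, rfl⟩
  calc m = ∑ i, c' i * m := by rw [← Finset.sum_mul, hcs', one_mul]
    _ ≤ ∑ i, c' i * u (q' i) :=
      Finset.sum_le_sum fun i _ => mul_le_mul_of_nonneg_left (hm ⟨q' i, rfl⟩) (hc' i).1

lemma exists_lt_of_Sop_lt {u : H3 → ℝ} {p : H3} {y : ℝ} (h : Sop u p < y) :
    ∃ (c : Fin 3 → ℝ) (q : Fin 3 → H3), (∀ i, c i ∈ Set.Icc (0 : ℝ) 1) ∧ ∑ i, c i = 1 ∧
      (∀ i, onPlane p (q i)) ∧ ∑ i, c i • q i = p ∧ ∑ i, c i * u (q i) < y := by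
  obtain ⟨_, ⟨c, q, hc, hcs, hq, hsum, rfl⟩, hlt⟩ := exists_lt_of_csInf_lt
    (by exact ⟨u p, ![1, 0, 0], fun _ => p, fun i => by fin_cases i <;> simp,
      by simp [Fin.sum_univ_three], fun _ => by simp only [onPlane]; ring,
      by simp [Fin.sum_univ_three], by simp [Fin.sum_univ_three]⟩) h
  exact ⟨c, q, hc, hcs, hq, hsum, hlt⟩

theorem S_upperSemicontinuous (u : H3 → ℝ) (husc : UpperSemicontinuous u)
    (hb : BddBelow (Set.range u)) :
    UpperSemicontinuous (Sop u) := by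
  intro p y hy
  obtain ⟨c, q, hc, hcs, hq, hsum, hlt⟩ := exists_lt_of_Sop_lt hy
  have hF : UpperSemicontinuous fun r => ∑ i, c i * u (hmul (hmul r (-p)) (q i)) :=
    upperSemicontinuous_sum_const_mul _ (fun i => (hc i).1) fun i =>
      (husc.comp (continuous_hmul_left (q i))).comp (continuous_hmul_left (-p))
  filter_upwards [hF p y (by simpa [hmul_neg_self, zero_hmul] using hlt)] with r hr
  refine lt_of_le_of_lt (Sop_le hb hc hcs (fun i => ?_) ?_) hr
  · simpa [hmul_neg_hmul_cancel] using onPlane_hmul (hmul r (-p)) (hq i)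
  · rw [← hmul_sum_smul _ _ _ _ hcs, hsum, hmul_neg_hmul_cancel]
end
end

section
/- If u: H → R is lower semicontinuous and coercive in the sense that inf_{|p|≥R} u(p)/|p| → ∞ as R → ∞, then S[u] is lower semicontinuous on H. -/
noncomputable section

/-!
If `S[u](pₙ) ≤ y < S[u](p)` along a sequence `pₙ → p`, pick near-optimal competitors
`(cₙ, qₙ)`. Coercivity makes `u` bounded below and bounds the weighted points `cₙᵢ qₙᵢ`, so along a
subsequence `cₙ → a` and `cₙᵢ qₙᵢ → rᵢ`. Superlinear growth forces `rᵢ = 0` where `aᵢ = 0`,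
and elsewhere `qₙᵢ → rᵢ / aᵢ`; the horizontal-plane condition is closed, so the limit is a
competitor for `p`, and lower semicontinuity of `u` puts its value below `S[u](p)`.
-/

open Filter Metric Topology Set

section NormedGroup

variable {α E : Type*} [NormedAddCommGroup E]

theorem LowerSemicontinuous.exists_affine_lower_bound [ProperSpace E] {u : E → ℝ}
    (hu : LowerSemicontinuous u) (hgrowth : ∀ C : ℝ, ∃ R : ℝ, ∀ p : E, R ≤ ‖p‖ → C ≤ u p / ‖p‖)
    (C : ℝ) : ∃ m, ∀ x, C * ‖x‖ + m ≤ u x := by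
  obtain ⟨R, hR⟩ := hgrowth C
  have hg : LowerSemicontinuous fun x => u x - C * ‖x‖ :=
    hu.add (continuous_const.mul continuous_norm).neg.lowerSemicontinuous
  obtain ⟨m, hm⟩ := (hg.lowerSemicontinuousOn _).bddBelow_of_isCompact
    (isCompact_closedBall (0 : E) (max R 0))
  refine ⟨min m 0, fun x => ?_⟩
  by_cases hx : ‖x‖ ≤ max R 0
  · have hmx := hm (mem_image_of_mem _ (mem_closedBall_zero_iff.2 hx))
    linarith [min_le_left m 0]
  · have hpos : 0 < ‖x‖ := lt_of_le_of_lt (le_max_right R 0) (not_le.1 hx)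
    have hCx := (le_div_iff₀ hpos).1 (hR x (le_of_max_le_left (not_le.1 hx).le))
    linarith [min_le_right m 0]

theorem eq_zero_of_tendsto_smul [NormedSpace ℝ E] {u : E → ℝ}
    (hgrowth : ∀ C : ℝ, ∃ m, ∀ x, C * ‖x‖ + m ≤ u x) {l : Filter α} [l.NeBot] {c : α → ℝ}
    {q : α → E} {r : E} {m K : ℝ}
    (hc0 : ∀ n, 0 ≤ c n) (hK : ∀ n, c n * (u (q n) - m) ≤ K) (hc : Tendsto c l (𝓝 0))
    (hr : Tendsto (fun n => c n • q n) l (𝓝 r)) : r = 0 := by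
  have hbound : ∀ C, C * ‖r‖ ≤ K := by
    intro C
    obtain ⟨mC, hmC⟩ := hgrowth C
    have hlim : Tendsto (fun n => C * ‖c n • q n‖ + c n * (mC - m)) l
        (𝓝 (C * ‖r‖ + 0 * (mC - m))) :=
      (hr.norm.const_mul C).add (hc.mul_const _)
    refine le_of_tendsto (by simpa using hlim) (Eventually.of_forall fun n => ?_)
    have hlow := mul_le_mul_of_nonneg_left (sub_le_sub_right (hmC (q n)) m) (hc0 n)
    rw [norm_smul, Real.norm_of_nonneg (hc0 n)]
    linarith [hK n]
  by_contra hr0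
  have hpos : 0 < ‖r‖ := norm_pos_iff.2 hr0
  have hK1 := hbound ((K + 1) / ‖r‖)
  rw [div_mul_cancel₀ _ hpos.ne'] at hK1
  linarith

theorem tendsto_of_tendsto_smul [NormedSpace ℝ E] {l : Filter α} {c : α → ℝ} {q : α → E}
    {a : ℝ} {r : E}
    (hc : Tendsto c l (𝓝 a)) (ha : a ≠ 0) (hr : Tendsto (fun n => c n • q n) l (𝓝 r)) :
    Tendsto q l (𝓝 (a⁻¹ • r)) := by
  refine ((hc.inv₀ ha).smul hr).congr' ?_
  filter_upwards [hc.eventually_ne ha] with n hn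
  rw [smul_smul, inv_mul_cancel₀ hn, one_smul]

end NormedGroup

theorem LowerSemicontinuous.eventually_lt_mul {α E : Type*} [TopologicalSpace E] {u : E → ℝ}
    (hu : LowerSemicontinuous u) {m : ℝ} (hm : ∀ x, m ≤ u x) {l : Filter α} {c : α → ℝ}
    {q : α → E} {a : ℝ} {Q : E}
    (hc0 : ∀ n, 0 ≤ c n) (hc : Tendsto c l (𝓝 a)) (ha : 0 ≤ a)
    (hq : a ≠ 0 → Tendsto q l (𝓝 Q)) {y : ℝ} (hy : y < a * u Q) :
    ∀ᶠ n in l, y < c n * u (q n) := by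
  obtain ⟨z, hyz, hz⟩ : ∃ z, y < a * z ∧ ∀ᶠ n in l, z ≤ u (q n) := by
    rcases ha.eq_or_lt with rfl | ha
    · exact ⟨m, by simpa using hy, Eventually.of_forall fun n => hm _⟩
    obtain ⟨z, hyz, hzu⟩ := exists_between ((div_lt_iff₀' ha).2 hy)
    exact ⟨z, (div_lt_iff₀' ha).1 hyz,
      ((hq ha.ne').eventually (hu Q z hzu)).mono fun n => le_of_lt⟩
  filter_upwards [(hc.mul_const z).eventually (lt_mem_nhds hyz), hz] with n hn hzn
  exact hn.trans_le (mul_le_mul_of_nonneg_left hzn (hc0 n))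

theorem Filter.eventually_lt_sum {α ι : Type*} [Fintype ι] {l : Filter α} {f : ι → ℝ}
    {g : α → ι → ℝ} (h : ∀ i, ∀ y < f i, ∀ᶠ x in l, y < g x i) {y : ℝ} (hy : y < ∑ i, f i) :
    ∀ᶠ x in l, y < ∑ i, g x i := by
  set δ := (∑ i, f i - y) / (Fintype.card ι + 1)
  have hδ : 0 < δ := div_pos (by linarith) (by positivity)
  filter_upwards [eventually_all.2 fun i => h i (f i - δ) (by linarith)] with x hx
  have hcard : (Fintype.card ι + 1) * δ = ∑ i, f i - y := mul_div_cancel₀ _ (by positivity)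
  calc y < ∑ i, (f i - δ) := by
        rw [Finset.sum_sub_distrib, Finset.sum_const, Finset.card_univ, nsmul_eq_mul]; linarith
    _ ≤ ∑ i, g x i := Finset.sum_le_sum fun i _ => (hx i).le

theorem mul_sub_le_sum_mul_sub {ι : Type*} [Fintype ι] {c f : ι → ℝ} {m : ℝ}
    (hc : c ∈ stdSimplex ℝ ι) (hf : ∀ i, m ≤ f i) (j : ι) :
    c j * (f j - m) ≤ ∑ i, c i * f i - m := by
  have : ∑ i, c i * f i - m = ∑ i, c i * (f i - m) := by
    simp only [mul_sub, Finset.sum_sub_distrib, ← Finset.sum_mul, hc.2, one_mul]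
  rw [this]
  exact Finset.single_le_sum (fun i _ => mul_nonneg (hc.1 i) (sub_nonneg.2 (hf i)))
    (Finset.mem_univ j)

theorem isClosed_onPlane : IsClosed {x : H3 × H3 | onPlane x.1 x.2} :=
  isClosed_eq (by fun_prop) continuous_const

structure IsCompetitor (p : H3) (c : Fin 3 → ℝ) (q : Fin 3 → H3) : Prop where
  weights_mem : c ∈ stdSimplex ℝ (Fin 3)
  mem_plane : ∀ i, onPlane p (q i)
  sum_smul : ∑ i, c i • q i = p

theorem Sop_eq_sInf (u : H3 → ℝ) (p : H3) :
    Sop u p = sInf {s | ∃ c q, IsCompetitor p c q ∧ s = ∑ i, c i * u (q i)} := by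
  have h : ∀ c q, IsCompetitor p c q ↔ (∀ i, c i ∈ Icc (0 : ℝ) 1) ∧ (∑ i, c i) = 1 ∧
      (∀ i, onPlane p (q i)) ∧ (∑ i, c i • q i) = p := fun c q =>
    ⟨fun h => ⟨mem_Icc_of_mem_stdSimplex h.weights_mem, h.weights_mem.2, h.mem_plane, h.sum_smul⟩,
      fun h => ⟨⟨fun i => (h.1 i).1, h.2.1⟩, h.2.2.1, h.2.2.2⟩⟩
  simp only [Sop, h, and_assoc]

theorem Sop_le_of_isCompetitor {u : H3 → ℝ} (hu : BddBelow (range u)) {p : H3}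
    {c : Fin 3 → ℝ} {q : Fin 3 → H3} (h : IsCompetitor p c q) :
    Sop u p ≤ ∑ i, c i * u (q i) := by
  obtain ⟨m, hm⟩ := hu
  rw [Sop_eq_sInf]
  refine csInf_le ⟨m, ?_⟩ ⟨c, q, h, rfl⟩
  rintro _ ⟨c', q', h', rfl⟩
  calc m = ∑ i, c' i * m := by rw [← Finset.sum_mul, h'.weights_mem.2, one_mul]
    _ ≤ ∑ i, c' i * u (q' i) := Finset.sum_le_sum fun i _ =>
      mul_le_mul_of_nonneg_left (hm (mem_range_self _)) (h'.weights_mem.1 i)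

theorem exists_isCompetitor_lt_of_Sop_lt {u : H3 → ℝ} {p : H3} {t : ℝ} (h : Sop u p < t) :
    ∃ c q, IsCompetitor p c q ∧ ∑ i, c i * u (q i) < t := by
  rw [Sop_eq_sInf] at h
  have htriv : IsCompetitor p (Pi.single 0 1) fun _ => p :=
    ⟨⟨fun i => by fin_cases i <;> simp, by simp⟩, fun _ => by unfold onPlane; ring,
      by simp⟩
  obtain ⟨_, ⟨c, q, hcq, rfl⟩, hlt⟩ :=
    exists_lt_of_csInf_lt (by exact ⟨_, _, _, htriv, rfl⟩) h
  exact ⟨c, q, hcq, hlt⟩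

theorem exists_isCompetitor_of_tendsto {α : Type*} {l : Filter α} [l.NeBot] {ps : α → H3}
    {p : H3} (hps : Tendsto ps l (𝓝 p)) {c : α → Fin 3 → ℝ} {q : α → Fin 3 → H3}
    (hcq : ∀ n, IsCompetitor (ps n) (c n) (q n)) {a : Fin 3 → ℝ} {r : Fin 3 → H3}
    (ha : a ∈ stdSimplex ℝ (Fin 3)) (hc : ∀ i, Tendsto (fun n => c n i) l (𝓝 (a i)))
    (hr : ∀ i, Tendsto (fun n => c n i • q n i) l (𝓝 (r i))) (hr0 : ∀ i, a i = 0 → r i = 0) :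
    ∃ Q, IsCompetitor p a Q ∧ ∀ i, a i ≠ 0 → Tendsto (fun n => q n i) l (𝓝 (Q i)) := by
  -- at a vanishing weight any point of the plane will do, and `p` lies on it
  set Q : Fin 3 → H3 := fun i => if a i = 0 then p else (a i)⁻¹ • r i
  have hQ : ∀ i, a i ≠ 0 → Tendsto (fun n => q n i) l (𝓝 (Q i)) := fun i hai => by
    simpa [Q, hai] using tendsto_of_tendsto_smul (hc i) hai (hr i)
  have hsmulQ : ∀ i, a i • Q i = r i := fun i => by
    by_cases hai : a i = 0
    · simp [hai, hr0 i hai]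
    · simp [Q, hai, smul_smul]
  refine ⟨Q, ⟨ha, fun i => ?_, ?_⟩, hQ⟩
  · by_cases hai : a i = 0
    · simp only [Q, hai, if_true]; unfold onPlane; ring
    · exact isClosed_onPlane.mem_of_tendsto (hps.prodMk_nhds (hQ i hai))
        (Eventually.of_forall fun n => (hcq n).mem_plane i)
  · simp only [hsmulQ]
    exact tendsto_nhds_unique (tendsto_finsetSum _ fun i _ => hr i)
      (hps.congr fun n => (hcq n).sum_smul.symm)

theorem exists_isCompetitor_le_of_tendsto {u : H3 → ℝ} (hu : LowerSemicontinuous u)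
    (hgrowth : ∀ C : ℝ, ∃ m, ∀ x, C * ‖x‖ + m ≤ u x) {ps : ℕ → H3} {p : H3}
    (hps : Tendsto ps atTop (𝓝 p)) {c : ℕ → Fin 3 → ℝ} {q : ℕ → Fin 3 → H3}
    (hcq : ∀ n, IsCompetitor (ps n) (c n) (q n)) {t : ℝ}
    (ht : ∀ n, ∑ i, c n i * u (q n i) ≤ t) :
    ∃ a Q, IsCompetitor p a Q ∧ ∑ i, a i * u (Q i) ≤ t := by
  obtain ⟨m, hm⟩ := hgrowth 1
  have hbdd : ∀ x, m ≤ u x := fun x => by linarith [hm x, norm_nonneg x]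
  have hterm : ∀ n i, c n i * (u (q n i) - m) ≤ t - m := fun n i =>
    (mul_sub_le_sum_mul_sub (hcq n).weights_mem (fun i => hbdd (q n i)) i).trans
      (by linarith [ht n])
  have hnorm : ∀ n i, ‖c n i • q n i‖ ≤ t - m := fun n i => by
    have hc0 := (hcq n).weights_mem.1 i
    rw [norm_smul, Real.norm_of_nonneg hc0]
    exact (mul_le_mul_of_nonneg_left (by linarith [hm (q n i)]) hc0).trans (hterm n i)
  have hmem : ∀ n, (c n, fun i => c n i • q n i) ∈
      stdSimplex ℝ (Fin 3) ×ˢ closedBall 0 (t - m) := fun n =>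
    ⟨(hcq n).weights_mem, mem_closedBall_zero_iff.2 <|
      (pi_norm_le_iff_of_nonneg ((norm_nonneg _).trans (hnorm n 0))).2 (hnorm n)⟩
  obtain ⟨⟨a, r⟩, ⟨ha, -⟩, φ, hφ, hlim⟩ :=
    (isCompact_stdSimplex ℝ (Fin 3)).prod (isCompact_closedBall 0 (t - m)) |>.tendsto_subseq hmem
  have hc : ∀ i, Tendsto (fun n => c (φ n) i) atTop (𝓝 (a i)) := fun i =>
    ((continuous_apply i).tendsto a).comp hlim.fst_nhds
  have hr : ∀ i, Tendsto (fun n => c (φ n) i • q (φ n) i) atTop (𝓝 (r i)) := fun i =>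
    ((continuous_apply i).tendsto r).comp hlim.snd_nhds
  have hr0 : ∀ i, a i = 0 → r i = 0 := fun i hai =>
    eq_zero_of_tendsto_smul hgrowth (fun n => (hcq (φ n)).weights_mem.1 i)
      (fun n => hterm (φ n) i) (hai ▸ hc i) (hr i)
  obtain ⟨Q, hQ, hqQ⟩ :=
    exists_isCompetitor_of_tendsto (hps.comp hφ.tendsto_atTop) (fun n => hcq (φ n)) ha hc hr hr0
  refine ⟨a, Q, hQ, le_of_forall_lt fun y hy => ?_⟩
  obtain ⟨n, hn⟩ := (Filter.eventually_lt_sum (fun i y hy => hu.eventually_lt_mul hbdd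
    (fun n => (hcq (φ n)).weights_mem.1 i) (hc i) (ha.1 i) (hqQ i) hy) hy).exists
  exact hn.trans_le (ht (φ n))

theorem S_lowerSemicontinuous (u : H3 → ℝ) (hlsc : LowerSemicontinuous u)
    (hcoer : Coercive u) :
    LowerSemicontinuous (Sop u) := by
  have hgrowth := hlsc.exists_affine_lower_bound hcoer
  have hbdd : BddBelow (range u) := by
    obtain ⟨m, hm⟩ := hgrowth 0
    exact ⟨m, forall_mem_range.2 fun x => by simpa using hm x⟩
  intro p y hy
  by_contra hfreq
  obtain ⟨ps, hps, hle⟩ := exists_seq_forall_of_frequently (not_eventually.1 hfreq)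
  obtain ⟨t, hyt, htS⟩ := exists_between hy
  choose c q hcq hval using fun n =>
    exists_isCompetitor_lt_of_Sop_lt ((not_lt.1 (hle n)).trans_lt hyt)
  obtain ⟨a, Q, haQ, haQt⟩ :=
    exists_isCompetitor_le_of_tendsto hlsc hgrowth hps hcq fun n => (hval n).le
  exact htS.not_ge ((Sop_le_of_isCompetitor hbdd haQ).trans haQt)
end
end
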